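/- With r_i = (x_j + x_k − x_i)/2 and y_i the cosine law function of x, the tangent law holds: tan(y_i/2)/cos(r_i) = tan(y_j/2)/cos(r_j) for all i, j. -/

import Mathlib

open Real Set

/-!
The half-angle formula `tan (y / 2) = sin y / (1 + cos y)` and the sum-to-product identity
`cos a + cos (b - c) = 2 cos ((c + a - b) / 2) cos ((a + b - c) / 2)` turn the cosine law into
`tan (y₁ / 2) = sin y₁ sin x₂ sin x₃ / (2 cos r₂ cos r₃)`, so that
`tan (y₁ / 2) / cos r₁ = sin y₁ sin x₂ sin x₃ / (2 cos r₁ cos r₂ cos r₃)`.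
The numerator is symmetric by the sine law: its square is
`1 - cos² x₁ - cos² x₂ - cos² x₃ - 2 cos x₁ cos x₂ cos x₃`, and it is positive.
-/

lemma tan_half_eq_sin_div_one_add_cos {y : ℝ} (hy : cos (y / 2) ≠ 0) :
    tan (y / 2) = sin y / (1 + cos y) := by
  set z := y / 2
  rw [show y = 2 * z by ring, sin_two_mul, cos_two_mul, tan_eq_sin_div_cos]
  field_simp
  ring

section CosineLaw

variable {a b c y : ℝ}

lemma one_add_cos_mul_sin_mul_sin (h : cos y * (sin b * sin c) = cos a + cos b * cos c) :
    (1 + cos y) * (sin b * sin c) = 2 * cos ((c + a - b) / 2) * cos ((a + b - c) / 2) := by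
  have hsum := cos_add_cos a (b - c)
  rw [cos_sub, show (a + (b - c)) / 2 = (a + b - c) / 2 by ring,
    show (a - (b - c)) / 2 = (c + a - b) / 2 by ring] at hsum
  linear_combination h + hsum

lemma tan_half_eq_of_cosine_law (hy : cos (y / 2) ≠ 0) (hbc : sin b * sin c ≠ 0)
    (h : cos y * (sin b * sin c) = cos a + cos b * cos c) :
    tan (y / 2) =
      sin y * (sin b * sin c) / (2 * cos ((c + a - b) / 2) * cos ((a + b - c) / 2)) := by
  rw [tan_half_eq_sin_div_one_add_cos hy, ← one_add_cos_mul_sin_mul_sin h,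
    mul_div_mul_right _ _ hbc]

lemma sq_sin_mul_sin_mul_sin_of_cosine_law
    (h : cos y * (sin b * sin c) = cos a + cos b * cos c) :
    (sin y * (sin b * sin c)) ^ 2 =
      1 - cos a ^ 2 - cos b ^ 2 - cos c ^ 2 - 2 * cos a * cos b * cos c := by
  linear_combination (sin b * sin c) ^ 2 * sin_sq_add_cos_sq y
    - (cos y * (sin b * sin c) + cos a + cos b * cos c) * h
    + (1 - cos c ^ 2) * sin_sq_add_cos_sq b + sin b ^ 2 * sin_sq_add_cos_sq c

/-- The sine law `sin y / sin a = sin y' / sin b`, with the denominators cleared. -/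
lemma sin_mul_sin_mul_sin_eq_of_cosine_law {y' : ℝ}
    (h : cos y * (sin b * sin c) = cos a + cos b * cos c)
    (h' : cos y' * (sin c * sin a) = cos b + cos c * cos a)
    (hpos : 0 ≤ sin y * (sin b * sin c)) (hpos' : 0 ≤ sin y' * (sin c * sin a)) :
    sin y * (sin b * sin c) = sin y' * (sin c * sin a) := by
  refine (pow_left_inj₀ hpos hpos' two_ne_zero).1 ?_
  rw [sq_sin_mul_sin_mul_sin_of_cosine_law h, sq_sin_mul_sin_mul_sin_of_cosine_law h']
  ring

end CosineLaw

theorem cosine_law_tangent_law (x1 x2 x3 y1 y2 y3 r1 r2 r3 : ℝ)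
    (hx1 : x1 ∈ Ioo 0 π) (hx2 : x2 ∈ Ioo 0 π) (hx3 : x3 ∈ Ioo 0 π)
    (hy1 : y1 ∈ Ioo 0 π) (hy2 : y2 ∈ Ioo 0 π) (hy3 : y3 ∈ Ioo 0 π)
    (h1 : cos y1 = (cos x1 + cos x2 * cos x3) / (sin x2 * sin x3))
    (h2 : cos y2 = (cos x2 + cos x3 * cos x1) / (sin x3 * sin x1))
    (h3 : cos y3 = (cos x3 + cos x1 * cos x2) / (sin x1 * sin x2))
    (hr1 : r1 = (x2 + x3 - x1) / 2) (hr2 : r2 = (x3 + x1 - x2) / 2)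
    (hr3 : r3 = (x1 + x2 - x3) / 2) :
    tan (y1 / 2) / cos r1 = tan (y2 / 2) / cos r2 ∧
    tan (y2 / 2) / cos r2 = tan (y3 / 2) / cos r3 := by
  subst hr1 hr2 hr3
  have hs1 := sin_pos_of_mem_Ioo hx1
  have hs2 := sin_pos_of_mem_Ioo hx2
  have hs3 := sin_pos_of_mem_Ioo hx3
  have hcos_half : ∀ y ∈ Ioo 0 π, cos (y / 2) ≠ 0 := fun y hy =>
    (cos_pos_of_mem_Ioo ⟨by linarith [hy.1, pi_pos], by linarith [hy.2]⟩).ne'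
  have hpos : ∀ y ∈ Ioo 0 π, ∀ {s t : ℝ}, 0 < s → 0 < t → 0 ≤ sin y * (s * t) :=
    fun y hy _ _ hs ht => (mul_pos (sin_pos_of_mem_Ioo hy) (mul_pos hs ht)).le
  rw [eq_div_iff (by positivity)] at h1 h2 h3
  rw [tan_half_eq_of_cosine_law (hcos_half y1 hy1) (by positivity) h1,
    tan_half_eq_of_cosine_law (hcos_half y2 hy2) (by positivity) h2,
    tan_half_eq_of_cosine_law (hcos_half y3 hy3) (by positivity) h3,
    sin_mul_sin_mul_sin_eq_of_cosine_law h1 h2 (hpos y1 hy1 hs2 hs3) (hpos y2 hy2 hs3 hs1),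
    sin_mul_sin_mul_sin_eq_of_cosine_law h2 h3 (hpos y2 hy2 hs3 hs1) (hpos y3 hy3 hs1 hs2)]
  constructor <;> ring
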